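/- If the monodromy of a flat line bundle around a ramification point is −1, i.e. p(c) = −1 for the loop c = w″_γ w″_β w″_α w′_γ w′_β w′_α, then the 2×2 matrix product P = S · U(γ) · L(β) · U(α) equals the identity, where S = [[0,1],[1,0]], U(α) = [[a′, a⁺],[0, a″]], L(β) = [[b′, 0],[b⁺, b″]], U(γ) = [[c′, c⁺],[0, c″]], with entries in an abelian group (written multiplicatively, with formal sums) given by a parallel-transport homomorphism p on the fundamental groupoid satisfying: a⁺ = p((w′_γ w′_β)⁻¹), b⁺ = p((w′_α w″_γ)⁻¹), c⁺ = p((w″_β w″_α)⁻¹), a′ = p(w′_α), a″ = p(w″_α), b′ = p(w′_β), b″ = p(w″_β), c′ = p(w′_γ), c″ = p(w″_γ), and p(w″_γ w″_β w″_α) · p(w′_γ w′_β w′_α) = −1. -/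

import Mathlib

/-- With `u = xc'' xb'' xa''` and `v = xc' xb' xa'`, the entries of the product are `xc'' b xa'`,
`xc'' b a + u`, `v + c b xa'` and `2 + c b a`; the relation `u v = -1` gives `1 / v = -u`,
`1 / u = -v` and `1 / (u v) = -1`. -/
theorem swap_mul_upper_mul_lower_mul_upper_eq_one {R : Type*} [CommRing R]
    (xa' xa'' xb' xb'' xc' xc'' a b c : R)
    (ha : a * (xc' * xb') = 1) (hb : b * (xa' * xc'') = 1) (hc : c * (xb'' * xa'') = 1)
    (hmon : xc'' * xb'' * xa'' * (xc' * xb' * xa') = -1) :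
    !![(0 : R), 1; 1, 0] * !![xc', c; 0, xc''] * !![xb', 0; b, xb''] * !![xa', a; 0, xa''] =
      1 := by
  simp only [Matrix.mul_fin_two, Matrix.one_fin_two]
  congr
  · linear_combination hb
  · linear_combination xc'' * b * a * hmon - xc'' * xb'' * xa'' * (b * (xa' * xc'')) * ha
      - xc'' * xb'' * xa'' * hb
  · linear_combination c * b * xa' * hmon - xc' * xb' * xa' * (c * (xb'' * xa'')) * hb
      - xc' * xb' * xa' * hc
  · linear_combination c * b * a * hmon - c * (xb'' * xa'') * (b * (xa' * xc'')) * ha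
      - c * (xb'' * xa'') * hb + ha

/-- the 2×2 matrix computation underlying triviality of the monodromy of the
nonabelianised connection around a branch point.  Over a field `K`, with invertible
parallel transports `xa', xa'', xb', xb'', xc', xc''` satisfying the monodromy relation
`xc'' * xb'' * xa'' * (xc' * xb' * xa') = -1` (monodromy `-1` around the ramification
point), and off-diagonal entries `a⁺ = (xc' * xb')⁻¹`, `b⁺ = (xa' * xc'')⁻¹`,
`c⁺ = (xb'' * xa'')⁻¹`, the product `S · U(γ) · L(β) · U(α)` is the identity matrix. -/
theorem monodromy_matrix_product_eq_one
    {K : Type*} [Field K] (xa' xa'' xb' xb'' xc' xc'' : K)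
    (hmon : xc'' * xb'' * xa'' * (xc' * xb' * xa') = -1) :
    (!![(0 : K), 1; 1, 0] *
      !![xc', (xb'' * xa'')⁻¹; 0, xc''] *
      !![xb', 0; (xa' * xc'')⁻¹, xb''] *
      !![xa', (xc' * xb')⁻¹; 0, xa'']) = 1 := by
  have hne : xc'' * xb'' * xa'' * (xc' * xb' * xa') ≠ 0 := by
    rw [hmon]
    exact neg_ne_zero.mpr one_ne_zero
  simp only [mul_ne_zero_iff] at hne
  obtain ⟨⟨⟨hc'', hb''⟩, ha''⟩, ⟨hc', hb'⟩, ha'⟩ := hne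
  exact swap_mul_upper_mul_lower_mul_upper_eq_one _ _ _ _ _ _ _ _ _
    (inv_mul_cancel₀ (mul_ne_zero hc' hb')) (inv_mul_cancel₀ (mul_ne_zero ha' hc''))
    (inv_mul_cancel₀ (mul_ne_zero hb'' ha'')) hmon
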